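/- Let V be a finite-dimensional real inner product space, C ⊆ V a proper cone and F a Finsler function on C. Then the polar of C^× equals {(p, w) ∈ V × ℝ | p ∈ C^o ∧ |w| ≤ F^o p} ∪ {(0, 0)}. -/

import Mathlib

/-- The polar cone of `C`. -/
def polarConeSet {V : Type*} [NormedAddCommGroup V] [InnerProductSpace ℝ V]
    (C : Set V) : Set V :=
  {p : V | p ≠ 0 ∧ ∀ y ∈ C, (inner ℝ p y : ℝ) ≤ 0}

/-- The set whose supremum defines the polar Finsler function `F^o p`. -/
def polarWSet {V : Type*} [NormedAddCommGroup V] [InnerProductSpace ℝ V]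
    (C : Set V) (F : V → ℝ) (p : V) : Set ℝ :=
  {w : ℝ | 0 ≤ w ∧ ∀ y ∈ C, (inner ℝ p y : ℝ) + w * F y ≤ 0}

/-- The polar Finsler function `F^o`. -/
noncomputable def polarFinsler {V : Type*} [NormedAddCommGroup V] [InnerProductSpace ℝ V]
    (C : Set V) (F : V → ℝ) (p : V) : ℝ :=
  sSup (polarWSet C F p)

/-!
For `y ∈ C` the supremum of `w * z` over `|z| ≤ F y` is `|w| * F y`, so `(p, w)` lies in the
polar of `C^×` exactly when `|w|` lies in `W_p = {w ≥ 0 | ∀ y ∈ C, ⟪p, y⟫ + w F y ≤ 0}`, the set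
whose supremum is `F^o p`. As `F ≥ 0` on `C`, `W_p` is a closed initial segment of `[0, ∞)`,
bounded because `F` is positive somewhere; hence `W_p = [0, F^o p]` whenever `0 ∈ W_p`, i.e.
whenever `p` is nonpositive on `C`. Finally `W_0 = {0}`, which accounts for the point `(0, 0)`.
-/

theorem forall_abs_le_add_mul_nonpos_iff {a w r : ℝ} (hr : 0 ≤ r) :
    (∀ z : ℝ, |z| ≤ r → a + w * z ≤ 0) ↔ a + |w| * r ≤ 0 := by
  constructor
  · intro h
    rcases le_total 0 w with hw | hw
    · simpa [abs_of_nonneg hw] using h r (by rw [abs_of_nonneg hr])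
    · simpa [abs_of_nonpos hw] using h (-r) (by rw [abs_neg, abs_of_nonneg hr])
  · intro h z hz
    have : w * z ≤ |w| * r := calc
      w * z ≤ |w * z| := le_abs_self _
      _ = |w| * |z| := abs_mul w z
      _ ≤ |w| * r := mul_le_mul_of_nonneg_left hz (abs_nonneg w)
    linarith

section PolarWSet

variable {V : Type*} [NormedAddCommGroup V] [InnerProductSpace ℝ V] {C : Set V} {F : V → ℝ}
  {p : V}

theorem isClosed_polarWSet : IsClosed (polarWSet C F p) := by
  have : polarWSet C F p =
      Set.Ici 0 ∩ ⋂ y ∈ C, {w : ℝ | (inner ℝ p y : ℝ) + w * F y ≤ 0} := by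
    ext w
    simp [polarWSet]
  rw [this]
  exact isClosed_Ici.inter <| isClosed_biInter fun y _ ↦
    isClosed_le (by fun_prop) continuous_const

theorem bddAbove_polarWSet {y₁ : V} (hy₁ : y₁ ∈ C) (hFy₁ : 0 < F y₁) :
    BddAbove (polarWSet C F p) := by
  refine ⟨-(inner ℝ p y₁ : ℝ) / F y₁, fun w hw ↦ ?_⟩
  rw [le_div_iff₀ hFy₁]
  linarith [hw.2 y₁ hy₁]

theorem zero_mem_polarWSet_iff : (0 : ℝ) ∈ polarWSet C F p ↔ ∀ y ∈ C, (inner ℝ p y : ℝ) ≤ 0 := by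
  simp [polarWSet]

theorem mem_polarWSet_of_le (hFnn : ∀ y ∈ C, 0 ≤ F y) {a b : ℝ} (hb : b ∈ polarWSet C F p)
    (ha : 0 ≤ a) (hab : a ≤ b) : a ∈ polarWSet C F p :=
  ⟨ha, fun y hy ↦ by nlinarith [hb.2 y hy, hFnn y hy]⟩

theorem mem_polarWSet_iff_le_polarFinsler (hFnn : ∀ y ∈ C, 0 ≤ F y) {y₁ : V} (hy₁ : y₁ ∈ C)
    (hFy₁ : 0 < F y₁) (hp : ∀ y ∈ C, (inner ℝ p y : ℝ) ≤ 0) {a : ℝ} (ha : 0 ≤ a) :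
    a ∈ polarWSet C F p ↔ a ≤ polarFinsler C F p := by
  have hbdd := bddAbove_polarWSet (p := p) hy₁ hFy₁
  refine ⟨fun h ↦ le_csSup hbdd h, fun h ↦ mem_polarWSet_of_le hFnn ?_ ha h⟩
  exact isClosed_polarWSet.csSup_mem ⟨0, zero_mem_polarWSet_iff.2 hp⟩ hbdd

theorem polarWSet_zero {y₁ : V} (hy₁ : y₁ ∈ C) (hFy₁ : 0 < F y₁) :
    polarWSet C F 0 = {0} := by
  ext w
  simp only [polarWSet, inner_zero_left, zero_add, Set.mem_ofPred_eq, Set.mem_singleton_iff]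
  constructor
  · rintro ⟨hw, h⟩
    nlinarith [h y₁ hy₁]
  · rintro rfl
    simp

theorem polar_liftedCone_eq (hFnn : ∀ y ∈ C, 0 ≤ F y) :
    {pw : V × ℝ | ∀ yz ∈ {yz : V × ℝ | yz.1 ∈ C ∧ |yz.2| ≤ F yz.1},
        (inner ℝ pw.1 yz.1 : ℝ) + pw.2 * yz.2 ≤ 0} =
      {pw : V × ℝ | |pw.2| ∈ polarWSet C F pw.1} := by
  ext ⟨p, w⟩
  simp only [Set.mem_ofPred_eq, Prod.forall, and_imp, polarWSet, abs_nonneg, true_and]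
  refine forall_congr' fun y ↦ ?_
  rw [forall_comm]
  exact forall_congr' fun hy ↦ forall_abs_le_add_mul_nonpos_iff (hFnn y hy)

end PolarWSet

theorem polar_of_lifted_cone_general
    {V : Type*} [NormedAddCommGroup V] [InnerProductSpace ℝ V]
    (C : Set V)
    (F : V → ℝ)
    (hFnn : ∀ y ∈ C, 0 ≤ F y)
    (hFpos : ∃ y₁ ∈ C, 0 < F y₁) :
    {pw : V × ℝ | ∀ yz ∈ {yz : V × ℝ | yz.1 ∈ C ∧ |yz.2| ≤ F yz.1},
        (inner ℝ pw.1 yz.1 : ℝ) + pw.2 * yz.2 ≤ 0} =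
      {pw : V × ℝ | pw.1 ∈ polarConeSet C ∧ |pw.2| ≤ polarFinsler C F pw.1} ∪
        {((0 : V), (0 : ℝ))} := by
  obtain ⟨y₁, hy₁, hFy₁⟩ := hFpos
  rw [polar_liftedCone_eq hFnn]
  ext ⟨p, w⟩
  simp only [Set.mem_ofPred_eq, Set.mem_union,
    Set.mem_singleton_iff, Prod.mk.injEq, polarConeSet]
  constructor
  · intro hw
    by_cases hp : p = 0
    · subst hp
      rw [polarWSet_zero hy₁ hFy₁, Set.mem_singleton_iff, abs_eq_zero] at hw
      exact Or.inr ⟨rfl, hw⟩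
    · have hp_nonpos := zero_mem_polarWSet_iff.1
        (mem_polarWSet_of_le hFnn hw le_rfl (abs_nonneg w))
      exact Or.inl ⟨⟨hp, hp_nonpos⟩,
        (mem_polarWSet_iff_le_polarFinsler hFnn hy₁ hFy₁ hp_nonpos (abs_nonneg w)).1 hw⟩
  · rintro (⟨⟨-, hp_nonpos⟩, hw⟩ | ⟨rfl, rfl⟩)
    · exact (mem_polarWSet_iff_le_polarFinsler hFnn hy₁ hFy₁ hp_nonpos (abs_nonneg w)).2 hw
    · rw [abs_zero, polarWSet_zero hy₁ hFy₁]
      rfl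

/-- The polar of the lifted cone `C^× = {(y, z) | y ∈ C, |z| ≤ F y}` equals
`{(p, w) | p ∈ C^o, |w| ≤ F^o p} ∪ {(0, 0)}`. -/
theorem polar_of_lifted_cone
    {V : Type*} [NormedAddCommGroup V] [InnerProductSpace ℝ V] [FiniteDimensional ℝ V]
    (C : Set V) (hne : C.Nonempty) (hconv : Convex ℝ C) (h0 : (0:V) ∉ C)
    (hcone : ∀ (s : ℝ) (y : V), 0 < s → y ∈ C → s • y ∈ C)
    (hclosed : IsClosed (C ∪ {0}))
    (hint : (interior (C ∪ {0})).Nonempty)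
    (F : V → ℝ)
    (hFnn : ∀ y ∈ C, 0 ≤ F y)
    (hFhom : ∀ (s : ℝ) (y : V), 0 < s → y ∈ C → F (s • y) = s * F y)
    (hFconc : ∀ y ∈ C, ∀ w ∈ C, ∀ t : ℝ, t ∈ Set.Icc (0:ℝ) 1 →
      t * F y + (1 - t) * F w ≤ F (t • y + (1 - t) • w))
    (hFpos : ∃ y₁ ∈ C, 0 < F y₁) :
    {pw : V × ℝ | ∀ yz ∈ {yz : V × ℝ | yz.1 ∈ C ∧ |yz.2| ≤ F yz.1},
        (inner ℝ pw.1 yz.1 : ℝ) + pw.2 * yz.2 ≤ 0} =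
      {pw : V × ℝ | pw.1 ∈ polarConeSet C ∧ |pw.2| ≤ polarFinsler C F pw.1} ∪
        {((0 : V), (0 : ℝ))} :=
  polar_of_lifted_cone_general C F hFnn hFpos
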